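/- Fix t > 0, λ1, λ2 > 0 and c1 ≥ c2 > 0, and write f1 = f^{ac}_{λ1,c1}, f2 = f^{ac}_{λ2,c2}. For every r with 0 < r ≤ c2·t, the double integral of f1(ξ)·f2(ζ) over the region {(ξ, ζ) : ξ + ζ ≤ r, 0 < ξ < c1t, 0 < ζ < c2t} equals 1 − exp(−λ1t + (λ1/c1)·√(c1²t² − r²)) − (λ1/c1)·e^{−(λ1+λ2)t} · ∫₀^r ξ·(c1²t² − ξ²)^{−1/2} · exp((λ1/c1)·√(c1²t² − ξ²)) · exp((λ2/c2)·√(c2²t² − (r − ξ)²)) dξ. -/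

import Mathlib

open MeasureTheory ProbabilityTheory

/-- Density of the absolutely continuous part of the law of the distance from
the origin of a planar Markov random flight with speed `c` and rate `lam` at time `t`. -/
noncomputable def fac (t lam c z : ℝ) : ℝ :=
  if 0 < z ∧ z < c * t then
    (lam / c) * z / Real.sqrt (c ^ 2 * t ^ 2 - z ^ 2) *
      Real.exp (-(lam * t) + (lam / c) * Real.sqrt (c ^ 2 * t ^ 2 - z ^ 2))
  else 0

/-!
The density `fac t λ c` is the derivative of `z ↦ -exp (-λt + (λ/c)√(c²t² - z²))` on `(0, ct)`,
so `∫₀ˢ fac = 1 - exp (-λt + (λ/c)√(c²t² - s²))` for `0 ≤ s ≤ ct`. For `r ≤ c₂t ≤ c₁t` the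
constraints `ξ < c₁t`, `ζ < c₂t` are implied by `ξ + ζ ≤ r`, so the region is the triangle
`ξ, ζ > 0, ξ + ζ ≤ r`; Fubini and this closed form for the inner integral in `ζ` leave
`∫₀ʳ f₁(ξ) (1 - exp (-λ₂t + (λ₂/c₂)√(c₂²t² - (r - ξ)²))) dξ`, and the first term integrates
to `1 - exp (-λ₁t + (λ₁/c₁)√(c₁²t² - r²))` once more.
-/

open Set Real

section Density

variable {t lam c : ℝ}

theorem fac_nonneg (hl : 0 ≤ lam) (hc : 0 < c) (z : ℝ) : 0 ≤ fac t lam c z := by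
  unfold fac
  split_ifs with hz
  · have := hz.1
    positivity
  · exact le_rfl

/-- At the endpoint `z = c * t` the formula vanishes too, since `x / √0 = x / 0 = 0`. -/
theorem fac_eq_of_mem_Icc {z : ℝ} (hz : z ∈ Icc 0 (c * t)) :
    fac t lam c z = (lam / c) * z / sqrt (c ^ 2 * t ^ 2 - z ^ 2) *
      exp (-(lam * t) + (lam / c) * sqrt (c ^ 2 * t ^ 2 - z ^ 2)) := by
  unfold fac
  split_ifs with h
  · rfl
  · rcases hz.1.eq_or_lt with rfl | hz0
    · simp
    · obtain rfl : z = c * t := hz.2.antisymm (not_lt.1 fun hlt => h ⟨hz0, hlt⟩)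
      simp [show c ^ 2 * t ^ 2 - (c * t) ^ 2 = 0 by ring]

theorem hasDerivAt_neg_exp_sqrt {z : ℝ} (hz : z ∈ Ioo 0 (c * t)) :
    HasDerivAt (fun x => -exp (-(lam * t) + (lam / c) * sqrt (c ^ 2 * t ^ 2 - x ^ 2)))
      (fac t lam c z) z := by
  have hu : c ^ 2 * t ^ 2 - z ^ 2 ≠ 0 := by nlinarith [hz.1, hz.2]
  have hpoly : HasDerivAt (fun x : ℝ => c ^ 2 * t ^ 2 - x ^ 2) (-(2 * z)) z := by
    simpa using (hasDerivAt_pow 2 z).const_sub (c ^ 2 * t ^ 2)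
  rw [fac, if_pos (show 0 < z ∧ z < c * t from hz)]
  refine (((hpoly.sqrt hu).const_mul (lam / c)).const_add (-(lam * t))).exp.neg.congr_deriv ?_
  ring

variable {s : ℝ}

theorem integrableOn_fac (hl : 0 ≤ lam) (hc : 0 < c) (hs : s ≤ c * t) :
    IntegrableOn (fac t lam c) (Ioc 0 s) :=
  intervalIntegral.integrableOn_deriv_of_nonneg (Continuous.continuousOn (by fun_prop))
    (fun z hz => hasDerivAt_neg_exp_sqrt ⟨hz.1, hz.2.trans_le hs⟩)
    (fun z _ => fac_nonneg hl hc z)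

theorem intervalIntegrable_fac (hl : 0 ≤ lam) (hc : 0 < c) (hs0 : 0 ≤ s) (hs : s ≤ c * t) :
    IntervalIntegrable (fac t lam c) volume 0 s :=
  (intervalIntegrable_iff_integrableOn_Ioc_of_le hs0).2 (integrableOn_fac hl hc hs)

theorem integral_fac (hl : 0 ≤ lam) (hc : 0 < c) (hs0 : 0 ≤ s) (hs : s ≤ c * t) :
    ∫ z in (0 : ℝ)..s, fac t lam c z =
      1 - exp (-(lam * t) + (lam / c) * sqrt (c ^ 2 * t ^ 2 - s ^ 2)) := by
  rw [intervalIntegral.integral_eq_sub_of_hasDerivAt_of_le hs0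
    (Continuous.continuousOn (by fun_prop)) (fun z hz => hasDerivAt_neg_exp_sqrt ⟨hz.1, hz.2.trans_le hs⟩)
    (intervalIntegrable_fac hl hc hs0 hs)]
  have hct : 0 ≤ c * t := hs0.trans hs
  have hcdf0 : -(lam * t) + (lam / c) * sqrt (c ^ 2 * t ^ 2 - 0 ^ 2) = 0 := by
    rw [show c ^ 2 * t ^ 2 - 0 ^ 2 = (c * t) ^ 2 by ring, sqrt_sq hct]
    field_simp
    ring
  rw [hcdf0, exp_zero]
  ring

end Density

def posTriangle (r : ℝ) : Set (ℝ × ℝ) := {p | p.1 + p.2 ≤ r ∧ 0 < p.1 ∧ 0 < p.2}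

theorem measurableSet_posTriangle (r : ℝ) : MeasurableSet (posTriangle r) :=
  (measurableSet_le (measurable_fst.add measurable_snd) measurable_const).inter
    ((measurableSet_lt measurable_const measurable_fst).inter
      (measurableSet_lt measurable_const measurable_snd))

theorem posTriangle_subset_prod (r : ℝ) : posTriangle r ⊆ Ioc 0 r ×ˢ Ioc 0 r :=
  fun _ ⟨hsum, h1, h2⟩ => ⟨⟨h1, by linarith⟩, ⟨h2, by linarith⟩⟩

theorem setIntegral_posTriangle_mul {f g : ℝ → ℝ} {r : ℝ} (hr : 0 ≤ r)
    (hf : IntegrableOn f (Ioc 0 r)) (hg : IntegrableOn g (Ioc 0 r)) :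
    ∫ p in posTriangle r, f p.1 * g p.2 =
      ∫ x in (0 : ℝ)..r, f x * ∫ y in (0 : ℝ)..(r - x), g y := by
  have hint : Integrable ((posTriangle r).indicator fun p : ℝ × ℝ => f p.1 * g p.2)
      (volume.prod volume) := by
    rw [integrable_indicator_iff (measurableSet_posTriangle r), ← Measure.volume_eq_prod]
    refine IntegrableOn.mono_set ?_ (posTriangle_subset_prod r)
    rw [IntegrableOn, Measure.volume_eq_prod, ← Measure.prod_restrict]
    exact hf.mul_prod hg
  have hslice (x : ℝ) : ∫ y, (posTriangle r).indicator (fun p : ℝ × ℝ => f p.1 * g p.2) (x, y) =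
      (Ioc 0 r).indicator (fun x => f x * ∫ y in (0 : ℝ)..(r - x), g y) x := by
    by_cases hx : x ∈ Ioc 0 r
    · have hrow (y : ℝ) : (posTriangle r).indicator (fun p : ℝ × ℝ => f p.1 * g p.2) (x, y) =
          f x * (Ioc 0 (r - x)).indicator g y := by
        simp only [indicator_apply, posTriangle, mem_ofPred_eq, mem_Ioc]
        split_ifs with h₁ h₂ h₂ <;> first | rfl | (exfalso; grind) | simp
      simp only [hrow, MeasureTheory.integral_const_mul, integral_indicator measurableSet_Ioc,
        indicator_of_mem hx, intervalIntegral.integral_of_le (sub_nonneg.2 hx.2)]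
    · have hrow (y : ℝ) :
          (posTriangle r).indicator (fun p : ℝ × ℝ => f p.1 * g p.2) (x, y) = 0 :=
        indicator_of_notMem (by rintro ⟨hsum, h₁, h₂⟩; exact hx ⟨h₁, by linarith⟩) _
      simp only [hrow, MeasureTheory.integral_zero, indicator_of_notMem hx]
  rw [← integral_indicator (measurableSet_posTriangle r), Measure.volume_eq_prod,
    integral_prod _ hint]
  simp only [hslice, integral_indicator measurableSet_Ioc, intervalIntegral.integral_of_le hr]

theorem double_integral_I1_small_r_general (t l1 l2 c1 c2 r : ℝ) (hl1 : 0 < l1) (hl2 : 0 < l2)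
    (hc2 : 0 < c2) (hc12 : c2 ≤ c1) (hr0 : 0 < r) (hr : r ≤ c2 * t) :
    (∫ p in {p : ℝ × ℝ | p.1 + p.2 ≤ r ∧ 0 < p.1 ∧ p.1 < c1 * t ∧ 0 < p.2 ∧ p.2 < c2 * t},
        fac t l1 c1 p.1 * fac t l2 c2 p.2)
      = 1 - Real.exp (-(l1 * t) + (l1 / c1) * Real.sqrt (c1 ^ 2 * t ^ 2 - r ^ 2))
        - (l1 / c1) * Real.exp (-((l1 + l2) * t)) *
            (∫ ξ in (0:ℝ)..r,
            ξ / Real.sqrt (c1 ^ 2 * t ^ 2 - ξ ^ 2) *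
              Real.exp ((l1 / c1) * Real.sqrt (c1 ^ 2 * t ^ 2 - ξ ^ 2)) *
              Real.exp ((l2 / c2) * Real.sqrt (c2 ^ 2 * t ^ 2 - (r - ξ) ^ 2))) := by
  have hc1 : 0 < c1 := hc2.trans_le hc12
  have ht : 0 < t := pos_of_mul_pos_right (hr0.trans_le hr) hc2.le
  have hrc1 : r ≤ c1 * t := hr.trans (by gcongr)
  have hregion : {p : ℝ × ℝ | p.1 + p.2 ≤ r ∧ 0 < p.1 ∧ p.1 < c1 * t ∧ 0 < p.2 ∧ p.2 < c2 * t}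
      = posTriangle r := by
    ext p
    simp only [posTriangle, mem_ofPred_eq]
    grind
  have hinner : EqOn (fun x => fac t l1 c1 x * ∫ y in (0 : ℝ)..(r - x), fac t l2 c2 y)
      (fun x => fac t l1 c1 x - fac t l1 c1 x *
        exp (-(l2 * t) + (l2 / c2) * sqrt (c2 ^ 2 * t ^ 2 - (r - x) ^ 2))) (uIcc 0 r) := by
    intro x hx
    rw [uIcc_of_le hr0.le] at hx
    simp only [integral_fac hl2.le hc2 (sub_nonneg.2 hx.2) (by linarith [hx.1]), mul_sub, mul_one]
  rw [hregion, setIntegral_posTriangle_mul hr0.le (integrableOn_fac hl1.le hc1 hrc1)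
      (integrableOn_fac hl2.le hc2 hr), intervalIntegral.integral_congr hinner,
    intervalIntegral.integral_sub (intervalIntegrable_fac hl1.le hc1 hr0.le hrc1)
      ((intervalIntegrable_fac hl1.le hc1 hr0.le hrc1).mul_continuousOn
        (Continuous.continuousOn (by fun_prop))),
    integral_fac hl1.le hc1 hr0.le hrc1, ← intervalIntegral.integral_const_mul]
  congr 1
  refine intervalIntegral.integral_congr fun x hx => ?_
  rw [uIcc_of_le hr0.le] at hx
  simp only [fac_eq_of_mem_Icc ⟨hx.1, hx.2.trans hrc1⟩, neg_add, add_mul, exp_add]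
  ring

theorem double_integral_I1_small_r (t l1 l2 c1 c2 r : ℝ) (ht : 0 < t) (hl1 : 0 < l1) (hl2 : 0 < l2)
    (hc2 : 0 < c2) (hc12 : c2 ≤ c1) (hr0 : 0 < r) (hr : r ≤ c2 * t) :
    (∫ p in {p : ℝ × ℝ | p.1 + p.2 ≤ r ∧ 0 < p.1 ∧ p.1 < c1 * t ∧ 0 < p.2 ∧ p.2 < c2 * t},
        fac t l1 c1 p.1 * fac t l2 c2 p.2)
      = 1 - Real.exp (-(l1 * t) + (l1 / c1) * Real.sqrt (c1 ^ 2 * t ^ 2 - r ^ 2))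
        - (l1 / c1) * Real.exp (-((l1 + l2) * t)) *
            (∫ ξ in (0:ℝ)..r,
            ξ / Real.sqrt (c1 ^ 2 * t ^ 2 - ξ ^ 2) *
              Real.exp ((l1 / c1) * Real.sqrt (c1 ^ 2 * t ^ 2 - ξ ^ 2)) *
              Real.exp ((l2 / c2) * Real.sqrt (c2 ^ 2 * t ^ 2 - (r - ξ) ^ 2))) :=
  double_integral_I1_small_r_general t l1 l2 c1 c2 r hl1 hl2 hc2 hc12 hr0 hr
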